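/- arXiv:2110.02480 — 2 statements merged into one kernel-verified Lean document; each statement's English description precedes it below -/
import Mathlib

section
/- KM update postulate U1 holds for PEKB belief update: for all PEKBs P and Q, P ⋄ Q ⊨ Q. -/
/-- Modal formulae over atomic propositions `Atom` and agents `Agt`. -/
inductive Form (Atom Agt : Type) : Type
  | top : Form Atom Agt
  | bot : Form Atom Agt
  | atom : Atom → Form Atom Agt
  | neg : Form Atom Agt → Form Atom Agt
  | and : Form Atom Agt → Form Atom Agt → Form Atom Agt
  | box : Agt → Form Atom Agt → Form Atom Agt

/-- `◇_i φ` abbreviates `¬ B_i ¬ φ`. -/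
def Form.dia {Atom Agt : Type} (i : Agt) (φ : Form Atom Agt) : Form Atom Agt :=
  Form.neg (Form.box i (Form.neg φ))

/-- A Kripke structure: worlds, a valuation, and an accessibility relation per agent. -/
structure Kripke (Atom Agt : Type) where
  W : Type
  val : W → Atom → Prop
  R : Agt → W → W → Prop

/-- Every accessibility relation is serial: every world has a successor. -/
def Kripke.Serial {Atom Agt : Type} (M : Kripke Atom Agt) : Prop :=
  ∀ (i : Agt) (w : M.W), ∃ v : M.W, M.R i w v

/-- Satisfaction of a formula at a world of a Kripke structure. -/
def Sat {Atom Agt : Type} (M : Kripke Atom Agt) : M.W → Form Atom Agt → Prop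
  | _, Form.top => True
  | _, Form.bot => False
  | w, Form.atom p => M.val w p
  | w, Form.neg φ => ¬ Sat M w φ
  | w, Form.and φ ψ => Sat M w φ ∧ Sat M w ψ
  | w, Form.box i φ => ∀ v : M.W, M.R i w v → Sat M v φ

/-- KD_n entailment from a set of formulae: truth at every world of every serial
Kripke structure satisfying all members of `S`. -/
def SetEntails {Atom Agt : Type} (S : Set (Form Atom Agt)) (φ : Form Atom Agt) : Prop :=
  ∀ (M : Kripke Atom Agt), M.Serial → ∀ w : M.W, (∀ ψ ∈ S, Sat M w ψ) → Sat M w φ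

/-- KD_n entailment between single formulae. -/
def Entails {Atom Agt : Type} (φ ψ : Form Atom Agt) : Prop :=
  SetEntails {φ} ψ

/-- A set of formulae is consistent iff all its members hold simultaneously at
some world of some serial Kripke structure. -/
def Consistent {Atom Agt : Type} (S : Set (Form Atom Agt)) : Prop :=
  ∃ (M : Kripke Atom Agt), M.Serial ∧ ∃ w : M.W, ∀ ψ ∈ S, Sat M w ψ

/-- Restricted modal literals: a (possibly empty) sequence of `B_i`/`◇_i`
operators applied to a propositional literal. -/
inductive IsRML {Atom Agt : Type} : Form Atom Agt → Prop
  | pos (p : Atom) : IsRML (Form.atom p)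
  | neg (p : Atom) : IsRML (Form.neg (Form.atom p))
  | box (i : Agt) {φ : Form Atom Agt} : IsRML φ → IsRML (Form.box i φ)
  | dia (i : Agt) {φ : Form Atom Agt} : IsRML φ → IsRML (Form.dia i φ)

/-- A proper epistemic knowledge base: a finite set of RMLs. -/
def IsPEKB {Atom Agt : Type} (S : Set (Form Atom Agt)) : Prop :=
  S.Finite ∧ ∀ φ ∈ S, IsRML φ

/-- Entailment of every member of a set (PEKB) from a set. -/
def KBEntails {Atom Agt : Type} (S T : Set (Form Atom Agt)) : Prop :=
  ∀ φ ∈ T, SetEntails S φ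

/-- Logical equivalence of two sets of formulae. -/
def KBEquiv {Atom Agt : Type} (S T : Set (Form Atom Agt)) : Prop :=
  KBEntails S T ∧ KBEntails T S

/-- Upward closure: the RMLs entailed by some member of `S`. -/
def upSet {Atom Agt : Type} (S : Set (Form Atom Agt)) : Set (Form Atom Agt) :=
  {ψ | IsRML ψ ∧ ∃ φ ∈ S, Entails φ ψ}

/-- Downward closure: the RMLs entailing some member of `S`. -/
def downSet {Atom Agt : Type} (S : Set (Form Atom Agt)) : Set (Form Atom Agt) :=
  {ψ | IsRML ψ ∧ ∃ φ ∈ S, Entails ψ φ}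

/-- Maximal elements of a set of RMLs under entailment. -/
def maxSet {Atom Agt : Type} (S : Set (Form Atom Agt)) : Set (Form Atom Agt) :=
  {φ ∈ S | ∀ ψ ∈ S, Entails ψ φ → Entails φ ψ}

/-- NNF-negation of an RML: push the negation through the modalities. -/
def nnfNeg {Atom Agt : Type} : Form Atom Agt → Form Atom Agt
  | Form.atom p => Form.neg (Form.atom p)
  | Form.neg (Form.atom p) => Form.atom p
  | Form.neg (Form.box i (Form.neg φ)) => Form.box i (nnfNeg φ)
  | Form.box i φ => Form.dia i (nnfNeg φ)
  | φ => φ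

/-- NNF-negation of every member of a PEKB. -/
def negKB {Atom Agt : Type} (S : Set (Form Atom Agt)) : Set (Form Atom Agt) :=
  nnfNeg '' S

/-- Belief erasure: `P ⊖ Q = max(↑P ∖ ↓Q)`. -/
def eraseKB {Atom Agt : Type} (P Q : Set (Form Atom Agt)) : Set (Form Atom Agt) :=
  maxSet (upSet P \ downSet Q)

/-- Belief update: `P ⋄ Q = max((P ⊖ ¬Q) ∪ Q)`. -/
def updateKB {Atom Agt : Type} (P Q : Set (Form Atom Agt)) : Set (Form Atom Agt) :=
  maxSet (eraseKB P (negKB Q) ∪ Q)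

/-- Meet: `P ⊓ Q = max(↑P ∩ ↑Q)`. -/
def meetKB {Atom Agt : Type} (P Q : Set (Form Atom Agt)) : Set (Form Atom Agt) :=
  maxSet (upSet P ∩ upSet Q)


section Aux

variable {Atom Agt : Type}

lemma entails_iff {φ ψ : Form Atom Agt} :
    Entails φ ψ ↔ ∀ M : Kripke Atom Agt, M.Serial → ∀ w, Sat M w φ → Sat M w ψ := by
  constructor
  · intro h M hM w hw
    exact h M hM w (by intro χ hχ; cases hχ; exact hw)
  · intro h M hM w hall
    exact h M hM w (hall φ rfl)

lemma entails_refl {φ : Form Atom Agt} : Entails φ φ :=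
  entails_iff.mpr (fun _ _ _ h => h)

lemma entails_trans {φ ψ χ : Form Atom Agt} (h1 : Entails φ ψ) (h2 : Entails ψ χ) :
    Entails φ χ :=
  entails_iff.mpr (fun M hM w h => (entails_iff.mp h2) M hM w ((entails_iff.mp h1) M hM w h))

/-- Syntactic entailment relation on RMLs: `Weaker χ φ` iff `φ` is obtained from `χ`
by relaxing some boxes into diamonds. -/
inductive Weaker : Form Atom Agt → Form Atom Agt → Prop
  | pos (p : Atom) : Weaker (.atom p) (.atom p)
  | neg (p : Atom) : Weaker (.neg (.atom p)) (.neg (.atom p))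
  | bb (i : Agt) {χ φ : Form Atom Agt} : Weaker χ φ → Weaker (.box i χ) (.box i φ)
  | dd (i : Agt) {χ φ : Form Atom Agt} : Weaker χ φ → Weaker (Form.dia i χ) (Form.dia i φ)
  | bd (i : Agt) {χ φ : Form Atom Agt} : Weaker χ φ → Weaker (.box i χ) (Form.dia i φ)

/-- Number of diamonds in an RML. -/
def diaCount : Form Atom Agt → ℕ
  | .neg (.box _ (.neg φ)) => diaCount φ + 1
  | .box _ φ => diaCount φ
  | _ => 0

lemma diaCount_dia (i : Agt) (φ : Form Atom Agt) :
    diaCount (Form.dia i φ) = diaCount φ + 1 := rfl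

lemma diaCount_box (i : Agt) (φ : Form Atom Agt) :
    diaCount (Form.box i φ) = diaCount φ := rfl

lemma weaker_diaCount {χ φ : Form Atom Agt} (h : Weaker χ φ) :
    diaCount χ ≤ diaCount φ ∧ (diaCount χ = diaCount φ → χ = φ) := by
  induction h with
  | pos p => exact ⟨le_refl _, fun _ => rfl⟩
  | neg p => exact ⟨le_refl _, fun _ => rfl⟩
  | bb i h ih =>
    rw [diaCount_box, diaCount_box]
    exact ⟨ih.1, fun e => by rw [ih.2 e]⟩
  | dd i h ih =>
    rw [diaCount_dia, diaCount_dia]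
    exact ⟨by omega, fun e => by rw [ih.2 (by omega)]⟩
  | bd i h ih =>
    rw [diaCount_box, diaCount_dia]
    exact ⟨by omega, fun e => by omega⟩

/-! ### Model constructions -/

/-- One-world model with given valuation and all self-loops. -/
def unitK (v : Atom → Prop) : Kripke Atom Agt :=
  ⟨Unit, fun _ => v, fun _ _ _ => True⟩

lemma unitK_serial (v : Atom → Prop) : (unitK v : Kripke Atom Agt).Serial :=
  fun _ w => ⟨w, trivial⟩

/-- Disjoint union of two Kripke models. -/
def sumK (M1 M2 : Kripke Atom Agt) : Kripke Atom Agt where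
  W := M1.W ⊕ M2.W
  val := fun w p => match w with | .inl u => M1.val u p | .inr u => M2.val u p
  R := fun i w v => match w, v with
    | .inl u, .inl v => M1.R i u v
    | .inr u, .inr v => M2.R i u v
    | _, _ => False

lemma sumK_serial {M1 M2 : Kripke Atom Agt} (h1 : M1.Serial) (h2 : M2.Serial) :
    (sumK M1 M2).Serial := by
  intro i w
  cases w with
  | inl u => obtain ⟨v, hv⟩ := h1 i u; exact ⟨.inl v, hv⟩
  | inr u => obtain ⟨v, hv⟩ := h2 i u; exact ⟨.inr v, hv⟩

lemma sat_inl {M1 M2 : Kripke Atom Agt} (φ : Form Atom Agt) (u : M1.W) :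
    Sat (sumK M1 M2) (.inl u) φ ↔ Sat M1 u φ := by
  induction φ generalizing u with
  | top => simp [Sat]
  | bot => simp [Sat]
  | atom p => simp [Sat, sumK]
  | neg φ ih => simp [Sat, ih]
  | and φ ψ ih1 ih2 => simp [Sat, ih1, ih2]
  | box i φ ih =>
    constructor
    · intro h v hv
      exact (ih v).mp (h (.inl v) hv)
    · intro h v hv
      cases v with
      | inl v => exact (ih v).mpr (h v hv)
      | inr v => exact absurd hv (by simp [sumK])

lemma sat_inr {M1 M2 : Kripke Atom Agt} (φ : Form Atom Agt) (u : M2.W) :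
    Sat (sumK M1 M2) (.inr u) φ ↔ Sat M2 u φ := by
  induction φ generalizing u with
  | top => simp [Sat]
  | bot => simp [Sat]
  | atom p => simp [Sat, sumK]
  | neg φ ih => simp [Sat, ih]
  | and φ ψ ih1 ih2 => simp [Sat, ih1, ih2]
  | box i φ ih =>
    constructor
    · intro h v hv
      exact (ih v).mp (h (.inr v) hv)
    · intro h v hv
      cases v with
      | inl v => exact absurd hv (by simp [sumK])
      | inr v => exact (ih v).mpr (h v hv)

/-- Add a fresh root below a model, with per-agent successor sets. -/
def addRoot (M : Kripke Atom Agt) (v0 : Atom → Prop) (succ : Agt → M.W → Prop) :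
    Kripke Atom Agt where
  W := Option M.W
  val := fun w p => match w with | none => v0 p | some u => M.val u p
  R := fun i w v => match w, v with
    | none, some v => succ i v
    | some u, some v => M.R i u v
    | _, none => False

lemma addRoot_serial {M : Kripke Atom Agt} {v0 : Atom → Prop} {succ : Agt → M.W → Prop}
    (hM : M.Serial) (hs : ∀ i, ∃ u, succ i u) : (addRoot M v0 succ).Serial := by
  intro i w
  cases w with
  | none => obtain ⟨u, hu⟩ := hs i; exact ⟨some u, hu⟩
  | some u => obtain ⟨v, hv⟩ := hM i u; exact ⟨some v, hv⟩

lemma sat_some {M : Kripke Atom Agt} {v0 : Atom → Prop} {succ : Agt → M.W → Prop}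
    (φ : Form Atom Agt) (u : M.W) :
    Sat (addRoot M v0 succ) (some u) φ ↔ Sat M u φ := by
  induction φ generalizing u with
  | top => simp [Sat]
  | bot => simp [Sat]
  | atom p => simp [Sat, addRoot]
  | neg φ ih => simp [Sat, ih]
  | and φ ψ ih1 ih2 => simp [Sat, ih1, ih2]
  | box i φ ih =>
    constructor
    · intro h v hv
      exact (ih v).mp (h (some v) hv)
    · intro h v hv
      cases v with
      | none => exact absurd hv (by simp [addRoot])
      | some v => exact (ih v).mpr (h v hv)

lemma sat_root_box {M : Kripke Atom Agt} {v0 : Atom → Prop} {succ : Agt → M.W → Prop}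
    {i : Agt} {φ : Form Atom Agt} :
    Sat (addRoot M v0 succ) none (Form.box i φ) ↔ ∀ u, succ i u → Sat M u φ := by
  constructor
  · intro h u hu
    exact (sat_some φ u).mp (h (some u) hu)
  · intro h v hv
    cases v with
    | none => exact absurd hv (by simp [addRoot])
    | some u => exact (sat_some φ u).mpr (h u hv)

lemma sat_root_dia {M : Kripke Atom Agt} {v0 : Atom → Prop} {succ : Agt → M.W → Prop}
    {i : Agt} {φ : Form Atom Agt} :
    Sat (addRoot M v0 succ) none (Form.dia i φ) ↔ ∃ u, succ i u ∧ Sat M u φ := by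
  show (¬ Sat (addRoot M v0 succ) none (Form.box i (Form.neg φ))) ↔ _
  rw [sat_root_box]
  constructor
  · intro h
    by_contra hc
    push_neg at hc
    exact h (fun u hu => fun hs => hc u hu hs)
  · rintro ⟨u, hu, hsat⟩ h
    exact (h u hu) hsat

lemma sat_root_atom {M : Kripke Atom Agt} {v0 : Atom → Prop} {succ : Agt → M.W → Prop}
    {p : Atom} : Sat (addRoot M v0 succ) none (Form.atom p) ↔ v0 p := Iff.rfl

/-! ### Satisfiability and falsifiability of RMLs -/

lemma rml_sat_falsif {φ : Form Atom Agt} (h : IsRML φ) :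
    (∃ M : Kripke Atom Agt, M.Serial ∧ ∃ w, Sat M w φ) ∧
    (∃ M : Kripke Atom Agt, M.Serial ∧ ∃ w, ¬ Sat M w φ) := by
  induction h with
  | pos p =>
    exact ⟨⟨unitK (fun _ => True), unitK_serial _, ⟨(), trivial⟩⟩,
           ⟨unitK (fun _ => False), unitK_serial _, ⟨(), fun h => h⟩⟩⟩
  | neg p =>
    exact ⟨⟨unitK (fun _ => False), unitK_serial _, ⟨(), fun h => h⟩⟩,
           ⟨unitK (fun _ => True), unitK_serial _, ⟨(), fun h => h trivial⟩⟩⟩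
  | box i h ih =>
    obtain ⟨⟨M1, hS1, w1, h1⟩, ⟨M2, hS2, w2, h2⟩⟩ := ih
    refine ⟨⟨addRoot M1 (fun _ => True) (fun _ u => u = w1),
             addRoot_serial hS1 (fun _ => ⟨w1, rfl⟩), none, ?_⟩,
            ⟨addRoot M2 (fun _ => True) (fun _ u => u = w2),
             addRoot_serial hS2 (fun _ => ⟨w2, rfl⟩), none, ?_⟩⟩
    · exact sat_root_box.mpr (fun u hu => hu ▸ h1)
    · intro hc
      exact h2 (sat_root_box.mp hc w2 rfl)
  | dia i h ih =>
    obtain ⟨⟨M1, hS1, w1, h1⟩, ⟨M2, hS2, w2, h2⟩⟩ := ih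
    refine ⟨⟨addRoot M1 (fun _ => True) (fun _ u => u = w1),
             addRoot_serial hS1 (fun _ => ⟨w1, rfl⟩), none, ?_⟩,
            ⟨addRoot M2 (fun _ => True) (fun _ u => u = w2),
             addRoot_serial hS2 (fun _ => ⟨w2, rfl⟩), none, ?_⟩⟩
    · exact sat_root_dia.mpr ⟨w1, rfl, h1⟩
    · intro hc
      obtain ⟨u, hu, hsat⟩ := sat_root_dia.mp hc
      exact h2 (hu ▸ hsat)

/-! ### Completeness: non-Weaker pairs have countermodels -/

lemma not_weaker_countermodel {χ : Form Atom Agt} (hχ : IsRML χ) :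
    ∀ {φ : Form Atom Agt}, IsRML φ → ¬ Weaker χ φ →
      ∃ M : Kripke Atom Agt, M.Serial ∧ ∃ w, Sat M w χ ∧ ¬ Sat M w φ := by
  induction hχ with
  | pos p =>
    intro φ hφ hnw
    cases hφ with
    | pos q =>
      have hpq : p ≠ q := fun e => hnw (e ▸ Weaker.pos p)
      refine ⟨unitK (fun r => r = p), unitK_serial _, (), ?_, ?_⟩
      · exact rfl
      · exact fun h => hpq (h.symm)
    | neg q =>
      refine ⟨unitK (fun r => r = p ∨ r = q), unitK_serial _, (), Or.inl rfl, ?_⟩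
      exact fun h => h (Or.inr rfl)
    | @box j φ' hφ' =>
      obtain ⟨_, M2, hS2, w2, h2⟩ := rml_sat_falsif hφ'
      refine ⟨addRoot M2 (fun r => r = p) (fun _ u => u = w2),
              addRoot_serial hS2 (fun _ => ⟨w2, rfl⟩), none, rfl, ?_⟩
      intro hc
      exact h2 (sat_root_box.mp hc w2 rfl)
    | @dia j φ' hφ' =>
      obtain ⟨_, M2, hS2, w2, h2⟩ := rml_sat_falsif hφ'
      refine ⟨addRoot M2 (fun r => r = p) (fun _ u => u = w2),
              addRoot_serial hS2 (fun _ => ⟨w2, rfl⟩), none, rfl, ?_⟩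
      intro hc
      obtain ⟨u, hu, hsat⟩ := sat_root_dia.mp hc
      exact h2 (hu ▸ hsat)
  | neg p =>
    intro φ hφ hnw
    cases hφ with
    | pos q =>
      refine ⟨unitK (fun _ => False), unitK_serial _, (), ?_, ?_⟩
      · exact fun h => h
      · exact fun h => h
    | neg q =>
      have hpq : p ≠ q := fun e => hnw (e ▸ Weaker.neg p)
      refine ⟨unitK (fun r => r = q), unitK_serial _, (), ?_, ?_⟩
      · exact fun h => hpq h
      · exact fun h => h rfl
    | @box j φ' hφ' =>
      obtain ⟨_, M2, hS2, w2, h2⟩ := rml_sat_falsif hφ'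
      refine ⟨addRoot M2 (fun _ => False) (fun _ u => u = w2),
              addRoot_serial hS2 (fun _ => ⟨w2, rfl⟩), none, fun h => h, ?_⟩
      intro hc
      exact h2 (sat_root_box.mp hc w2 rfl)
    | @dia j φ' hφ' =>
      obtain ⟨_, M2, hS2, w2, h2⟩ := rml_sat_falsif hφ'
      refine ⟨addRoot M2 (fun _ => False) (fun _ u => u = w2),
              addRoot_serial hS2 (fun _ => ⟨w2, rfl⟩), none, fun h => h, ?_⟩
      intro hc
      obtain ⟨u, hu, hsat⟩ := sat_root_dia.mp hc
      exact h2 (hu ▸ hsat)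
  | @box i χ' hχ' ih =>
    intro φ hφ hnw
    obtain ⟨⟨M1, hS1, w1, h1⟩, _⟩ := rml_sat_falsif hχ'
    cases hφ with
    | pos q =>
      refine ⟨addRoot M1 (fun _ => False) (fun _ u => u = w1),
              addRoot_serial hS1 (fun _ => ⟨w1, rfl⟩), none, ?_, fun h => h⟩
      exact sat_root_box.mpr (fun u hu => hu ▸ h1)
    | neg q =>
      refine ⟨addRoot M1 (fun _ => True) (fun _ u => u = w1),
              addRoot_serial hS1 (fun _ => ⟨w1, rfl⟩), none, ?_, fun h => h trivial⟩
      exact sat_root_box.mpr (fun u hu => hu ▸ h1)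
    | @box j φ' hφ' =>
      by_cases hij : j = i
      · subst hij
        have : ¬ Weaker χ' φ' := fun hw => hnw (Weaker.bb j hw)
        obtain ⟨M', hS', w', hs', hf'⟩ := ih hφ' this
        refine ⟨addRoot M' (fun _ => True) (fun _ u => u = w'),
                addRoot_serial hS' (fun _ => ⟨w', rfl⟩), none, ?_, ?_⟩
        · exact sat_root_box.mpr (fun u hu => hu ▸ hs')
        · intro hc
          exact hf' (sat_root_box.mp hc w' rfl)
      · obtain ⟨_, M2, hS2, w2, h2⟩ := rml_sat_falsif hφ'
        refine ⟨addRoot (sumK M1 M2) (fun _ => True)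
                  (fun a u => (a = i ∧ u = .inl w1) ∨ (a ≠ i ∧ u = .inr w2)),
                addRoot_serial (sumK_serial hS1 hS2) ?_, none, ?_, ?_⟩
        · intro a
          by_cases ha : a = i
          · exact ⟨.inl w1, Or.inl ⟨ha, rfl⟩⟩
          · exact ⟨.inr w2, Or.inr ⟨ha, rfl⟩⟩
        · refine sat_root_box.mpr ?_
          rintro u (⟨-, rfl⟩ | ⟨hne, -⟩)
          · exact (sat_inl χ' w1).mpr h1
          · exact absurd rfl hne
        · intro hc
          have := sat_root_box.mp hc (.inr w2) (Or.inr ⟨hij, rfl⟩)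
          exact h2 ((sat_inr φ' w2).mp this)
    | @dia j φ' hφ' =>
      by_cases hij : j = i
      · subst hij
        have : ¬ Weaker χ' φ' := fun hw => hnw (Weaker.bd j hw)
        obtain ⟨M', hS', w', hs', hf'⟩ := ih hφ' this
        refine ⟨addRoot M' (fun _ => True) (fun _ u => u = w'),
                addRoot_serial hS' (fun _ => ⟨w', rfl⟩), none, ?_, ?_⟩
        · exact sat_root_box.mpr (fun u hu => hu ▸ hs')
        · intro hc
          obtain ⟨u, hu, hsat⟩ := sat_root_dia.mp hc
          exact hf' (hu ▸ hsat)
      · obtain ⟨_, M2, hS2, w2, h2⟩ := rml_sat_falsif hφ'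
        refine ⟨addRoot (sumK M1 M2) (fun _ => True)
                  (fun a u => (a = i ∧ u = .inl w1) ∨ (a ≠ i ∧ u = .inr w2)),
                addRoot_serial (sumK_serial hS1 hS2) ?_, none, ?_, ?_⟩
        · intro a
          by_cases ha : a = i
          · exact ⟨.inl w1, Or.inl ⟨ha, rfl⟩⟩
          · exact ⟨.inr w2, Or.inr ⟨ha, rfl⟩⟩
        · refine sat_root_box.mpr ?_
          rintro u (⟨-, rfl⟩ | ⟨hne, -⟩)
          · exact (sat_inl χ' w1).mpr h1
          · exact absurd rfl hne
        · intro hc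
          obtain ⟨u, hu, hsat⟩ := sat_root_dia.mp hc
          rcases hu with ⟨he, rfl⟩ | ⟨-, rfl⟩
          · exact hij he
          · exact h2 ((sat_inr φ' w2).mp hsat)
  | @dia i χ' hχ' ih =>
    intro φ hφ hnw
    obtain ⟨⟨M1, hS1, w1, h1⟩, _⟩ := rml_sat_falsif hχ'
    cases hφ with
    | pos q =>
      refine ⟨addRoot M1 (fun _ => False) (fun _ u => u = w1),
              addRoot_serial hS1 (fun _ => ⟨w1, rfl⟩), none, ?_, fun h => h⟩
      exact sat_root_dia.mpr ⟨w1, rfl, h1⟩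
    | neg q =>
      refine ⟨addRoot M1 (fun _ => True) (fun _ u => u = w1),
              addRoot_serial hS1 (fun _ => ⟨w1, rfl⟩), none, ?_, fun h => h trivial⟩
      exact sat_root_dia.mpr ⟨w1, rfl, h1⟩
    | @box j φ' hφ' =>
      obtain ⟨_, M2, hS2, w2, h2⟩ := rml_sat_falsif hφ'
      refine ⟨addRoot (sumK M1 M2) (fun _ => True)
                (fun a u => (a = i ∧ u = .inl w1) ∨ u = .inr w2),
              addRoot_serial (sumK_serial hS1 hS2) (fun a => ⟨.inr w2, Or.inr rfl⟩),
              none, ?_, ?_⟩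
      · exact sat_root_dia.mpr ⟨.inl w1, Or.inl ⟨rfl, rfl⟩, (sat_inl χ' w1).mpr h1⟩
      · intro hc
        have := sat_root_box.mp hc (.inr w2) (Or.inr rfl)
        exact h2 ((sat_inr φ' w2).mp this)
    | @dia j φ' hφ' =>
      by_cases hij : j = i
      · subst hij
        have : ¬ Weaker χ' φ' := fun hw => hnw (Weaker.dd j hw)
        obtain ⟨M', hS', w', hs', hf'⟩ := ih hφ' this
        refine ⟨addRoot M' (fun _ => True) (fun _ u => u = w'),
                addRoot_serial hS' (fun _ => ⟨w', rfl⟩), none, ?_, ?_⟩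
        · exact sat_root_dia.mpr ⟨w', rfl, hs'⟩
        · intro hc
          obtain ⟨u, hu, hsat⟩ := sat_root_dia.mp hc
          exact hf' (hu ▸ hsat)
      · obtain ⟨_, M2, hS2, w2, h2⟩ := rml_sat_falsif hφ'
        refine ⟨addRoot (sumK M1 M2) (fun _ => True)
                  (fun a u => (a = i ∧ u = .inl w1) ∨ (a ≠ i ∧ u = .inr w2)),
                addRoot_serial (sumK_serial hS1 hS2) ?_, none, ?_, ?_⟩
        · intro a
          by_cases ha : a = i
          · exact ⟨.inl w1, Or.inl ⟨ha, rfl⟩⟩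
          · exact ⟨.inr w2, Or.inr ⟨ha, rfl⟩⟩
        · exact sat_root_dia.mpr ⟨.inl w1, Or.inl ⟨rfl, rfl⟩, (sat_inl χ' w1).mpr h1⟩
        · intro hc
          obtain ⟨u, hu, hsat⟩ := sat_root_dia.mp hc
          rcases hu with ⟨he, rfl⟩ | ⟨-, rfl⟩
          · exact hij he
          · exact h2 ((sat_inr φ' w2).mp hsat)

lemma entails_weaker {χ φ : Form Atom Agt} (hχ : IsRML χ) (hφ : IsRML φ)
    (h : Entails χ φ) : Weaker χ φ := by
  by_contra hw
  obtain ⟨M, hS, w, h1, h2⟩ := not_weaker_countermodel hχ hφ hw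
  exact h2 ((entails_iff.mp h) M hS w h1)

end Aux

/-- KM update postulate U1 for PEKB belief update:
`P ⋄ Q ⊨ Q` for all PEKBs `P`, `Q`. -/
theorem km_update_u1 {Atom Agt : Type}
    (P Q : Set (Form Atom Agt)) (hP : IsPEKB P) (hQ : IsPEKB Q) :
    KBEntails (updateKB P Q) Q := by
  classical
  intro φ hφQ
  set S : Set (Form Atom Agt) := eraseKB P (negKB Q) ∪ Q with hSdef
  have hSrml : ∀ ψ ∈ S, IsRML ψ := by
    intro ψ hψ
    rcases hψ with h | h
    · exact (h.1.1).1
    · exact hQ.2 ψ h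
  -- the set of elements of S entailing φ
  have hφS : φ ∈ S := Or.inr hφQ
  have hTne : (diaCount '' {ψ | ψ ∈ S ∧ Entails ψ φ}).Nonempty :=
    ⟨diaCount φ, φ, ⟨hφS, entails_refl⟩, rfl⟩
  obtain ⟨χ, ⟨hχS, hχφ⟩, hχn⟩ := Nat.sInf_mem hTne
  have hmax : χ ∈ maxSet S := by
    refine ⟨hχS, ?_⟩
    intro ψ hψS hψχ
    by_contra hnot
    have hW : Weaker ψ χ := entails_weaker (hSrml ψ hψS) (hSrml χ hχS) hψχ
    obtain ⟨hle, heq⟩ := weaker_diaCount hW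
    have hne : ψ ≠ χ := fun e => hnot (e ▸ entails_refl)
    have hlt : diaCount ψ < diaCount χ := lt_of_le_of_ne hle (fun e => hne (heq e))
    have hψT : diaCount ψ ∈ diaCount '' {ψ | ψ ∈ S ∧ Entails ψ φ} :=
      ⟨ψ, ⟨hψS, entails_trans hψχ hχφ⟩, rfl⟩
    have := Nat.sInf_le hψT
    omega
  intro M hM w hall
  exact (entails_iff.mp hχφ) M hM w (hall χ hmax)
end

section
/- KM update postulate U3 holds for PEKB belief update: for all PEKBs P and Q, if P is consistent and Q is consistent, then P ⋄ Q is consistent. -/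
section Aux

variable {Atom Agt : Type}

/-- The bodies of the `B_i` formulae of a set. -/
def boxSet (i : Agt) (S : Set (Form Atom Agt)) : Set (Form Atom Agt) :=
  {χ | Form.box i χ ∈ S}

/-- A set of RMLs that is pairwise consistent. -/
def GoodSet (S : Set (Form Atom Agt)) : Prop :=
  (∀ φ ∈ S, IsRML φ) ∧ ∀ φ ∈ S, ∀ ψ ∈ S, Consistent ({φ, ψ} : Set (Form Atom Agt))

/-- The canonical model: worlds are sets of formulae. -/
def canonM (Atom Agt : Type) : Kripke Atom Agt where
  W := Set (Form Atom Agt)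
  val := fun S p => Form.atom p ∈ S
  R := fun i S T => T = boxSet i S ∨ ∃ ψ, Form.dia i ψ ∈ S ∧ T = insert ψ (boxSet i S)

lemma canonM_serial : (canonM Atom Agt).Serial :=
  fun i S => ⟨boxSet i S, Or.inl rfl⟩

lemma pair_cons_elim {φ ψ : Form Atom Agt}
    (h : Consistent ({φ, ψ} : Set (Form Atom Agt))) :
    ∃ (M : Kripke Atom Agt), M.Serial ∧ ∃ w : M.W, Sat M w φ ∧ Sat M w ψ := by
  obtain ⟨M, hser, w, hw⟩ := h
  exact ⟨M, hser, w, hw φ (by simp), hw ψ (by simp)⟩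

lemma cons_pair_intro {φ ψ : Form Atom Agt} (M : Kripke Atom Agt) (hser : M.Serial)
    (w : M.W) (h1 : Sat M w φ) (h2 : Sat M w ψ) :
    Consistent ({φ, ψ} : Set (Form Atom Agt)) := by
  refine ⟨M, hser, w, ?_⟩
  intro χ hχ
  rcases hχ with rfl | rfl <;> assumption

lemma isRML_of_box {i : Agt} {φ : Form Atom Agt} (h : IsRML (Form.box i φ)) : IsRML φ := by
  cases h with
  | box _ h => exact h

lemma isRML_of_dia {i : Agt} {φ : Form Atom Agt} (h : IsRML (Form.dia i φ)) : IsRML φ := by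
  cases h with
  | dia _ h => exact h

lemma goodSet_boxSet {S : Set (Form Atom Agt)} (hS : GoodSet S) (i : Agt) :
    GoodSet (boxSet i S) := by
  constructor
  · intro φ hφ
    exact isRML_of_box (hS.1 _ hφ)
  · intro φ hφ ψ hψ
    obtain ⟨M, hser, w, h1, h2⟩ := pair_cons_elim (hS.2 _ hφ _ hψ)
    obtain ⟨v, hv⟩ := hser i w
    exact cons_pair_intro M hser v (h1 v hv) (h2 v hv)

lemma goodSet_insert_dia {S : Set (Form Atom Agt)} (hS : GoodSet S) {i : Agt}
    {ψ : Form Atom Agt} (hψ : Form.dia i ψ ∈ S) :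
    GoodSet (insert ψ (boxSet i S)) := by
  have hdia : ∀ {χ : Form Atom Agt}, χ ∈ boxSet i S →
      ∃ (M : Kripke Atom Agt), M.Serial ∧ ∃ w : M.W, Sat M w ψ ∧ Sat M w χ := by
    intro χ hχ
    obtain ⟨M, hser, w, h1, h2⟩ := pair_cons_elim (hS.2 _ hψ _ hχ)
    simp only [Sat, Form.dia] at h1
    push_neg at h1
    obtain ⟨v, hv, hvψ⟩ := h1
    exact ⟨M, hser, v, hvψ, h2 v hv⟩
  constructor
  · intro φ hφ
    rcases hφ with rfl | hφ
    · exact isRML_of_dia (hS.1 _ hψ)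
    · exact isRML_of_box (hS.1 _ hφ)
  · intro φ hφ χ hχ
    rcases hφ with rfl | hφ <;> rcases hχ with rfl | hχ
    · obtain ⟨M, hser, w, h1, h2⟩ := pair_cons_elim (hS.2 _ hψ _ hψ)
      simp only [Sat, Form.dia] at h1
      push_neg at h1
      obtain ⟨v, hv, hvψ⟩ := h1
      exact cons_pair_intro M hser v hvψ hvψ
    · obtain ⟨M, hser, v, h1, h2⟩ := hdia hχ
      exact cons_pair_intro M hser v h1 h2
    · obtain ⟨M, hser, v, h1, h2⟩ := hdia hφ
      exact cons_pair_intro M hser v h2 h1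
    · obtain ⟨M, hser, w, h1, h2⟩ := pair_cons_elim (hS.2 _ hφ _ hχ)
      obtain ⟨v, hv⟩ := hser i w
      exact cons_pair_intro M hser v (h1 v hv) (h2 v hv)

/-- Truth lemma: any formula in a good set is satisfied there in the canonical model. -/
lemma truth_lemma {φ : Form Atom Agt} (h : IsRML φ) :
    ∀ S : Set (Form Atom Agt), GoodSet S → φ ∈ S →
      Sat (canonM Atom Agt) S φ := by
  induction h with
  | pos p =>
    intro S hS hφ
    exact hφ
  | neg p =>
    intro S hS hφ
    intro hc
    obtain ⟨M, hser, w, h1, h2⟩ := pair_cons_elim (hS.2 _ hφ _ hc)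
    exact h1 h2
  | box i hr ih =>
    intro S hS hφ
    intro T hT
    rcases hT with rfl | ⟨ψ, hψ, rfl⟩
    · exact ih _ (goodSet_boxSet hS i) hφ
    · exact ih _ (goodSet_insert_dia hS hψ) (Or.inr hφ)
  | dia i hr ih =>
    intro S hS hφ
    rename_i χ
    intro hall
    have hT : (canonM Atom Agt).R i S (insert χ (boxSet i S) : Set (Form Atom Agt)) :=
      Or.inr ⟨χ, hφ, rfl⟩
    exact hall _ hT (ih _ (goodSet_insert_dia hS hφ) (Or.inl rfl))

/-- Semantic correctness of NNF negation for RMLs. -/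
lemma nnfNeg_sat {φ : Form Atom Agt} (h : IsRML φ) (M : Kripke Atom Agt) (w : M.W) :
    Sat M w (nnfNeg φ) ↔ ¬ Sat M w φ := by
  induction h generalizing w with
  | pos p => simp [nnfNeg, Sat]
  | neg p => simp [nnfNeg, Sat]
  | box i hr ih =>
    simp [nnfNeg, Form.dia, Sat, ih]
  | dia i hr ih =>
    simp [nnfNeg, Form.dia, Sat, ih]

end Aux

/-- KM update postulate U3 for PEKB belief update: if `P` and
`Q` are consistent, then so is `P ⋄ Q`. -/
theorem km_update_u3 {Atom Agt : Type}
    (P Q : Set (Form Atom Agt)) (hP : IsPEKB P) (hQ : IsPEKB Q)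
    (hPc : Consistent P) (hQc : Consistent Q) :
    Consistent (updateKB P Q) := by
  classical
  set S₀ : Set (Form Atom Agt) := (upSet P \ downSet (negKB Q)) ∪ Q with hS₀
  -- the update set is contained in S₀
  have hsub : updateKB P Q ⊆ S₀ := by
    intro φ hφ
    rcases hφ.1 with h | h
    · exact Or.inl h.1
    · exact Or.inr h
  -- S₀ is a good set
  have hgood : GoodSet S₀ := by
    constructor
    · intro φ hφ
      rcases hφ with h | h
      · exact h.1.1
      · exact hQ.2 _ h
    · -- pairwise consistency
      have hPP : ∀ φ ∈ upSet P, ∀ ψ ∈ upSet P,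
          Consistent ({φ, ψ} : Set (Form Atom Agt)) := by
        intro φ hφ ψ hψ
        obtain ⟨M, hser, w, hw⟩ := hPc
        obtain ⟨_, χ, hχ, hχφ⟩ := hφ
        obtain ⟨_, χ', hχ', hχ'ψ⟩ := hψ
        refine cons_pair_intro M hser w ?_ ?_
        · exact hχφ M hser w (by intro x hx; rcases hx with rfl; exact hw _ hχ)
        · exact hχ'ψ M hser w (by intro x hx; rcases hx with rfl; exact hw _ hχ')
      have hQQ : ∀ φ ∈ Q, ∀ ψ ∈ Q, Consistent ({φ, ψ} : Set (Form Atom Agt)) := by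
        intro φ hφ ψ hψ
        obtain ⟨M, hser, w, hw⟩ := hQc
        exact cons_pair_intro M hser w (hw _ hφ) (hw _ hψ)
      have hPQ : ∀ φ ∈ upSet P \ downSet (negKB Q), ∀ ψ ∈ Q,
          Consistent ({φ, ψ} : Set (Form Atom Agt)) := by
        intro φ hφ ψ hψ
        have hφrml : IsRML φ := hφ.1.1
        have hψrml : IsRML ψ := hQ.2 _ hψ
        have hne : ¬ Entails φ (nnfNeg ψ) := by
          intro hc
          exact hφ.2 ⟨hφrml, nnfNeg ψ, ⟨ψ, hψ, rfl⟩, hc⟩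
        simp only [Entails, SetEntails] at hne
        push_neg at hne
        obtain ⟨M, hser, w, hw, hneg⟩ := hne
        have hSφ : Sat M w φ := hw φ (by simp)
        have hSψ : Sat M w ψ := by
          by_contra hc
          exact hneg ((nnfNeg_sat hψrml M w).mpr hc)
        exact cons_pair_intro M hser w hSφ hSψ
      intro φ hφ ψ hψ
      rcases hφ with hφ | hφ <;> rcases hψ with hψ | hψ
      · exact hPP _ hφ.1 _ hψ.1
      · exact hPQ _ hφ _ hψ
      · obtain ⟨M, hser, w, h1, h2⟩ := pair_cons_elim (hPQ _ hψ _ hφ)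
        exact cons_pair_intro M hser w h2 h1
      · exact hQQ _ hφ _ hψ
  refine ⟨canonM Atom Agt, canonM_serial, S₀, ?_⟩
  intro ψ hψ
  have hψ' := hsub hψ
  exact truth_lemma (hgood.1 _ hψ') _ hgood hψ'
end
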